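/- arXiv:2402.09827 — 6 statements merged into one kernel-verified Lean document; each statement's English description precedes it below -/
import Mathlib

section
/- Let d ≥ 2 be a squarefree integer with d ≡ 7 (mod 8) and let (x, y) be the fundamental solution of the Pell equation x² − d·y² = 1. Suppose there exist positive integers k, u, v such that k is odd, v is odd, u is powerful, d divides v, and (x + y·√d)^k = u + v·√d. Then y is odd. -/
/-- A positive integer (here: an integer) `n` is powerful if `p² ∣ n` for every prime `p ∣ n`. -/
def IsPowerful (n : ℤ) : Prop := ∀ p : ℤ, Prime p → p ∣ n → p ^ 2 ∣ n

theorem Pell.Solution₁.y_dvd_y_pow {d : ℤ} (a : Pell.Solution₁ d) (k : ℕ) : a.y ∣ (a ^ k).y := by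
  induction k with
  | zero => simp only [pow_zero, Pell.Solution₁.y_one, dvd_zero]
  | succ n ih =>
    rw [pow_succ, Pell.Solution₁.y_mul]
    exact dvd_add (dvd_mul_left _ _) (ih.mul_right _)

theorem Int.odd_of_dvd_odd {m n : ℤ} (hmn : m ∣ n) (hn : Odd n) : Odd m :=
  Int.not_even_iff_odd.mp fun hm => Int.not_even_iff_odd.mpr hn (even_iff_two_dvd.mpr (hm.two_dvd.trans hmn))

theorem stmt_0_general (d : ℤ)
    (a : Pell.Solution₁ d)
    (h : ∃ (k : ℕ) (u v : ℤ), 0 < k ∧ 0 < u ∧ 0 < v ∧ Odd k ∧ Odd v ∧ IsPowerful u ∧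
      d ∣ v ∧ (a ^ k).x = u ∧ (a ^ k).y = v) :
    Odd a.y := by
  obtain ⟨k, u, v, -, -, -, -, hv, -, -, -, hy⟩ := h
  exact Int.odd_of_dvd_odd (hy ▸ a.y_dvd_y_pow k) hv

/-- Let `d ≥ 2` be a squarefree integer with `d ≡ 7 (mod 8)` and let `(x, y)` be the
fundamental solution of the Pell equation `x² − d·y² = 1`. Suppose there exist positive
integers `k, u, v` such that `k` is odd, `v` is odd, `u` is powerful, `d ∣ v` and
`(x + y·√d)^k = u + v·√d`. Then `y` is odd. -/
theorem stmt_0 (d : ℤ) (hd2 : 2 ≤ d) (hdsf : Squarefree d) (hd8 : d % 8 = 7)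
    (a : Pell.Solution₁ d) (ha : Pell.IsFundamental a)
    (h : ∃ (k : ℕ) (u v : ℤ), 0 < k ∧ 0 < u ∧ 0 < v ∧ Odd k ∧ Odd v ∧ IsPowerful u ∧
      d ∣ v ∧ (a ^ k).x = u ∧ (a ^ k).y = v) :
    Odd a.y :=
  stmt_0_general d a h
end

section
/- Let p and q be primes with p ≡ 1 (mod 4) and q ≡ 3 (mod 4), let d = p·q, and let (x, y) be the fundamental solution of the Pell equation x² − d·y² = 1. If y is even, then there exist integers a and b with |p·a² − q·b²| = 1. -/
/-!
Write the fundamental solution as `x = 2k + 1`, `y = 2c`; then `k (k + 1) = p q c²` with `k` and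
`k + 1` coprime, so `p` and `q` distribute over the two factors and each factor is a square times
the primes it absorbed. If both go into `k`, then `(√(k + 1), √(k / pq))` is a solution with a
smaller `x`, contradicting fundamentality; if both go into `k + 1`, then `s² + 1 = p q t²`,
impossible modulo 4 since `p q ≡ 3`. In the two mixed cases `k = p s², k + 1 = q t²` or
`k = q s², k + 1 = p t²`, which is the claim.
-/

theorem Int.sq_of_isCoprime_of_pos {m n c : ℤ} (hm : 0 < m) (h : IsCoprime m n)
    (heq : m * n = c ^ 2) : ∃ s : ℤ, m = s ^ 2 := by
  obtain ⟨s, hs | hs⟩ := Int.sq_of_isCoprime h heq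
  · exact ⟨s, hs⟩
  · nlinarith [sq_nonneg s]

theorem Int.exists_sq_of_isCoprime_of_mul_eq_mul_sq {m n e f c : ℤ} (hm : 0 < m) (hn : 0 < n)
    (he : 0 < e) (hf : 0 < f) (hmn : IsCoprime m n) (hem : e ∣ m) (hfn : f ∣ n)
    (h : m * n = e * f * c ^ 2) : ∃ s t : ℤ, m = e * s ^ 2 ∧ n = f * t ^ 2 := by
  obtain ⟨u, rfl⟩ := hem
  obtain ⟨v, rfl⟩ := hfn
  have huv : u * v = c ^ 2 :=
    mul_left_cancel₀ (mul_pos he hf).ne' (by rw [← h]; ring)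
  have hcop : IsCoprime u v := hmn.of_mul_left_right.of_mul_right_right
  obtain ⟨s, rfl⟩ := Int.sq_of_isCoprime_of_pos (pos_of_mul_pos_right hm he.le) hcop huv
  obtain ⟨t, rfl⟩ := Int.sq_of_isCoprime_of_pos (pos_of_mul_pos_right hn hf.le) hcop.symm
    (by rw [mul_comm, huv])
  exact ⟨s, t, rfl, rfl⟩

theorem Int.exists_sq_of_isCoprime_of_mul_eq_prime_mul_prime_mul_sq {p q : ℕ} (hp : p.Prime)
    (hq : q.Prime) (hpq : p ≠ q) {m n c : ℤ} (hm : 0 < m) (hn : 0 < n) (hmn : IsCoprime m n)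
    (h : m * n = p * q * c ^ 2) :
    ∃ s t : ℤ, (m = p * q * s ^ 2 ∧ n = t ^ 2) ∨ (m = p * s ^ 2 ∧ n = q * t ^ 2) ∨
      (m = q * s ^ 2 ∧ n = p * t ^ 2) ∨ (m = s ^ 2 ∧ n = p * q * t ^ 2) := by
  have hp0 : (0 : ℤ) < p := by exact_mod_cast hp.pos
  have hq0 : (0 : ℤ) < q := by exact_mod_cast hq.pos
  have hpq' : IsCoprime (p : ℤ) q := ((Nat.coprime_primes hp hq).mpr hpq).isCoprime
  have hpmn : (p : ℤ) ∣ m * n := ⟨q * c ^ 2, by rw [h]; ring⟩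
  have hqmn : (q : ℤ) ∣ m * n := ⟨p * c ^ 2, by rw [h]; ring⟩
  rcases (Nat.prime_iff_prime_int.mp hp).dvd_or_dvd hpmn with hpm | hpn <;>
    rcases (Nat.prime_iff_prime_int.mp hq).dvd_or_dvd hqmn with hqm | hqn
  · obtain ⟨s, t, hs, ht⟩ := Int.exists_sq_of_isCoprime_of_mul_eq_mul_sq hm hn
      (mul_pos hp0 hq0) one_pos hmn (hpq'.mul_dvd hpm hqm) (one_dvd n) (c := c) (by rw [h]; ring)
    exact ⟨s, t, .inl ⟨hs, by rw [ht, one_mul]⟩⟩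
  · obtain ⟨s, t, hs, ht⟩ := Int.exists_sq_of_isCoprime_of_mul_eq_mul_sq hm hn hp0 hq0 hmn
      hpm hqn h
    exact ⟨s, t, .inr (.inl ⟨hs, ht⟩)⟩
  · obtain ⟨s, t, hs, ht⟩ := Int.exists_sq_of_isCoprime_of_mul_eq_mul_sq hm hn hq0 hp0 hmn
      hqm hpn (c := c) (by rw [h]; ring)
    exact ⟨s, t, .inr (.inr (.inl ⟨hs, ht⟩))⟩
  · obtain ⟨s, t, hs, ht⟩ := Int.exists_sq_of_isCoprime_of_mul_eq_mul_sq hm hn one_pos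
      (mul_pos hp0 hq0) hmn (one_dvd m) (hpq'.mul_dvd hpn hqn) (c := c) (by rw [h]; ring)
    exact ⟨s, t, .inr (.inr (.inr ⟨by rw [hs, one_mul], ht⟩))⟩

theorem Int.sq_add_one_ne_mul_sq_of_mod_four_eq_three {n : ℕ} (hn : n % 4 = 3) (s t : ℤ) :
    s ^ 2 + 1 ≠ n * t ^ 2 := by
  intro h
  have h4 := congrArg (Int.cast : ℤ → ZMod 4) h
  have hn4 : (n : ZMod 4) = 3 := by rw [← ZMod.natCast_mod n 4, hn]; rfl
  push_cast at h4
  rw [hn4] at h4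
  have : ∀ x y : ZMod 4, x ^ 2 + 1 ≠ 3 * y ^ 2 := by decide
  exact this _ _ h4

theorem Pell.Solution₁.exists_mul_add_one_eq_of_even_y {d : ℤ} (a : Pell.Solution₁ d)
    (hy : Even a.y) : ∃ k c : ℤ, a.x = 2 * k + 1 ∧ k * (k + 1) = d * c ^ 2 := by
  obtain ⟨c, hc⟩ := hy
  have hprop := a.prop
  rw [hc] at hprop
  obtain ⟨k, hk⟩ : Odd a.x :=
    (Int.odd_pow' two_ne_zero).mp ⟨2 * d * c ^ 2, by linear_combination hprop⟩
  refine ⟨k, c, hk, ?_⟩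
  rw [hk] at hprop
  exact mul_left_cancel₀ four_ne_zero (by linear_combination hprop)

theorem Pell.IsFundamental.x_le_abs {d : ℤ} {a : Pell.Solution₁ d} (ha : Pell.IsFundamental a)
    {t s : ℤ} (h : t ^ 2 - d * s ^ 2 = 1) (hs : s ≠ 0) : a.x ≤ |t| := by
  refine ha.x_le_x (a := Pell.Solution₁.mk |t| s (by rwa [sq_abs])) ?_
  rw [Pell.Solution₁.x_mk, ← one_lt_sq_iff_one_lt_abs, eq_add_of_sub_eq h, lt_add_iff_pos_right]
  exact mul_pos ha.d_pos (sq_pos_of_ne_zero hs)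

/-- Let `p, q` be primes with `p ≡ 1 (mod 4)`, `q ≡ 3 (mod 4)`, let `d = p·q`, and let
`(x, y)` be the fundamental solution of `x² − d·y² = 1`. If `y` is even, then there are
integers `a, b` with `|p·a² − q·b²| = 1`. -/
theorem stmt_3 (p q : ℕ) (hp : p.Prime) (hq : q.Prime) (hp4 : p % 4 = 1) (hq4 : q % 4 = 3)
    (d : ℤ) (hd : d = (p : ℤ) * q)
    (a : Pell.Solution₁ d) (ha : Pell.IsFundamental a) (hy : Even a.y) :
    ∃ s t : ℤ, |(p : ℤ) * s ^ 2 - (q : ℤ) * t ^ 2| = 1 := by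
  obtain ⟨k, c, hx, hk⟩ := a.exists_mul_add_one_eq_of_even_y hy
  have hk0 : 0 < k := by linarith [ha.1]
  subst hd
  obtain ⟨s, t, ⟨hks, hkt⟩ | ⟨hks, hkt⟩ | ⟨hks, hkt⟩ | ⟨hks, hkt⟩⟩ :=
    Int.exists_sq_of_isCoprime_of_mul_eq_prime_mul_prime_mul_sq hp hq (by omega) hk0
      (by omega) ⟨-1, 1, by ring⟩ hk
  · have hs : s ≠ 0 := by rintro rfl; linarith
    have hxt := ha.x_le_abs (t := t) (by linear_combination hks - hkt) hs
    linarith [Int.natAbs_le_self_sq t, Int.natCast_natAbs t]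
  · exact ⟨s, t, by rw [← hks, ← hkt]; norm_num⟩
  · exact ⟨t, s, by rw [← hks, ← hkt]; norm_num⟩
  · have hpq4 : p * q % 4 = 3 := by rw [Nat.mul_mod, hp4, hq4]
    exact absurd (by push_cast; linear_combination hkt - hks)
      (Int.sq_add_one_ne_mul_sq_of_mod_four_eq_three hpq4 s t)
end

section
/- Let p and q be primes with p ≡ 5 (mod 8) and q ≡ 3 (mod 4), let d = p·q, and let (x, y) be the fundamental solution of the Pell equation x² − d·y² = 1. Then y is odd if and only if p is a quadratic non-residue modulo q (equivalently, the Legendre symbol (p/q) equals −1). -/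
/-!
If `y` is odd then `x` is even and `(x - 1)(x + 1) = pq y²`; if `y = 2z` then `x = 2k + 1` and
`k (k + 1) = pq z²`. In both cases the two factors are coprime, so they are `a u²` and `b v²` with
`ab = pq`, and their difference (`2`, resp. `1`) read modulo `p` or `q` decides whether `p` is a
square mod `q`: `2` and `-2` are non-residues mod `p ≡ 5 (mod 8)`, `-1` is a non-residue mod
`q ≡ 3 (mod 4)`, and `(p/q) = (q/p)` by reciprocity. The one case this leaves open, `k = pq u²` and
`k + 1 = v²`, yields the solution `(v, u)` with `v < x`, which minimality of `x` rules out.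
-/

theorem Nat.exists_eq_mul_sq_of_coprime_of_mul_eq {m n d y : ℕ} (hd : d ≠ 0)
    (hmn : m.Coprime n) (h : m * n = d * y ^ 2) :
    ∃ a b u v : ℕ, a * b = d ∧ m = a * u ^ 2 ∧ n = b * v ^ 2 := by
  have hab : d.gcd m * d.gcd n = d := by
    rw [← hmn.gcd_mul, Nat.gcd_eq_left ⟨y ^ 2, h⟩]
  obtain ⟨m', hm⟩ := Nat.gcd_dvd_right d m
  obtain ⟨n', hn⟩ := Nat.gcd_dvd_right d n
  have hmn' : m' * n' = y ^ 2 := by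
    refine Nat.eq_of_mul_eq_mul_left (Nat.pos_of_ne_zero hd) ?_
    calc d * (m' * n') = d.gcd m * m' * (d.gcd n * n') := by nth_rewrite 1 [← hab]; ring
      _ = d * y ^ 2 := by rw [← hm, ← hn, h]
  have hco : m'.Coprime n' :=
    (hmn.coprime_dvd_left (Dvd.intro_left _ hm.symm)).coprime_dvd_right
      (Dvd.intro_left _ hn.symm)
  obtain ⟨u, rfl⟩ := exists_eq_pow_of_mul_eq_pow (Nat.isUnit_iff.mpr hco) hmn'
  obtain ⟨v, rfl⟩ :=
    exists_eq_pow_of_mul_eq_pow (Nat.isUnit_iff.mpr hco.symm) ((mul_comm _ _).trans hmn')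
  exact ⟨_, _, u, v, hab, hm, hn⟩

theorem Nat.eq_of_mul_eq_prime_mul_prime {p q a b : ℕ} (hp : p.Prime) (hq : q.Prime)
    (h : a * b = p * q) :
    a = 1 ∧ b = p * q ∨ a = p ∧ b = q ∨ a = q ∧ b = p ∨ a = p * q ∧ b = 1 := by
  have hpq : 0 < p * q := Nat.mul_pos hp.pos hq.pos
  have ha : a ∈ (p * q).divisors := Nat.mem_divisors.mpr ⟨⟨b, h.symm⟩, hpq.ne'⟩
  rw [Nat.divisors_mul, hp.divisors, hq.divisors] at ha
  simp only [Finset.mem_mul, Finset.mem_insert, Finset.mem_singleton] at ha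
  obtain ⟨s, hs | hs, t, ht | ht, rfl⟩ := ha <;> subst s t
  · exact .inl ⟨one_mul 1, by simpa using h⟩
  · exact .inr <| .inr <| .inl ⟨one_mul q, Nat.eq_of_mul_eq_mul_left hq.pos (by linarith)⟩
  · exact .inr <| .inl ⟨mul_one p, Nat.eq_of_mul_eq_mul_left hp.pos (by linarith)⟩
  · exact .inr <| .inr <| .inr ⟨rfl, Nat.eq_of_mul_eq_mul_left hpq (by linarith)⟩

theorem isSquare_of_mul_sq_eq_one {M : Type*} [DivisionMonoid M] {c v : M}
    (h : c * v ^ 2 = 1) : IsSquare c :=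
  eq_inv_of_mul_eq_one_left h ▸ (IsSquare.sq v).inv

theorem Pell.IsFundamental.exists_nat_minimal {d : ℤ} {n : ℕ} (hn : d = n)
    {a : Pell.Solution₁ d} (ha : Pell.IsFundamental a) :
    ∃ x y : ℕ, (y : ℤ) = a.y ∧ 1 < x ∧ x ^ 2 = n * y ^ 2 + 1 ∧
      ∀ u v : ℕ, 1 < v → v ^ 2 = n * u ^ 2 + 1 → x ≤ v := by
  subst hn
  obtain ⟨hx, hy, hmin⟩ := ha
  obtain ⟨x, hx'⟩ : ∃ x : ℕ, (x : ℤ) = a.x := ⟨a.x.toNat, Int.toNat_of_nonneg (by omega)⟩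
  obtain ⟨y, hy'⟩ : ∃ y : ℕ, (y : ℤ) = a.y := ⟨a.y.toNat, Int.toNat_of_nonneg hy.le⟩
  refine ⟨x, y, hy', by omega, ?_, fun u v hv h => ?_⟩
  · have := a.prop
    rw [← hx', ← hy'] at this
    zify
    linarith
  · have h' : (v : ℤ) ^ 2 - n * u ^ 2 = 1 := by
      linarith [(by exact_mod_cast h : (v : ℤ) ^ 2 = n * u ^ 2 + 1)]
    have hxv := hmin (b := .mk v u h') (by rw [Pell.Solution₁.x_mk]; exact_mod_cast hv)
    rw [Pell.Solution₁.x_mk, ← hx'] at hxv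
    exact_mod_cast hxv

theorem isSquare_of_pell_minimal_of_even {p q x y : ℕ} [hp : Fact p.Prime] [hq : Fact q.Prime]
    (hp4 : p % 4 = 1) (hq4 : q % 4 = 3) (hx : 1 < x) (hxy : x ^ 2 = p * q * y ^ 2 + 1)
    (hmin : ∀ u v : ℕ, 1 < v → v ^ 2 = p * q * u ^ 2 + 1 → x ≤ v) (hy : Even y) :
    IsSquare (p : ZMod q) := by
  obtain ⟨z, rfl⟩ := hy
  obtain ⟨k, rfl⟩ : Odd x := by
    refine (Nat.odd_pow_iff two_ne_zero).mp ?_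
    rw [hxy]
    exact (Even.mul_left (Nat.even_pow.mpr ⟨⟨z, rfl⟩, two_ne_zero⟩) _).add_one
  have hk : k * (k + 1) = p * q * z ^ 2 := by linarith
  obtain ⟨a, b, u, v, hab, rfl, hn⟩ := Nat.exists_eq_mul_sq_of_coprime_of_mul_eq
    (Nat.mul_pos hp.out.pos hq.out.pos).ne'
    (Nat.coprime_self_add_right.mpr (Nat.coprime_one_right _)) hk
  rcases Nat.eq_of_mul_eq_prime_mul_prime hp.out hq.out hab with
    ⟨ha, hb⟩ | ⟨ha, hb⟩ | ⟨ha, hb⟩ | ⟨ha, hb⟩ <;> subst a b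
  · have hu : (u : ZMod q) ^ 2 = -1 := by
      simpa [eq_neg_iff_add_eq_zero] using congrArg (Nat.cast : ℕ → ZMod q) hn
    exact absurd (hu ▸ IsSquare.sq _) (ZMod.exists_sq_eq_neg_one_iff.not.mpr (by omega))
  · have hv : (q : ZMod p) * v ^ 2 = 1 := by
      simpa using (congrArg (Nat.cast : ℕ → ZMod p) hn).symm
    exact (ZMod.exists_sq_eq_prime_iff_of_mod_four_eq_one hp4 (by omega)).mp
      (isSquare_of_mul_sq_eq_one hv)
  · have hv : (p : ZMod q) * v ^ 2 = 1 := by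
      simpa using (congrArg (Nat.cast : ℕ → ZMod q) hn).symm
    exact isSquare_of_mul_sq_eq_one hv
  · have hv : 1 < v := by nlinarith
    have hxv := hmin u v hv (by linarith)
    nlinarith

theorem not_isSquare_of_pell_of_odd {p q x y : ℕ} [hp : Fact p.Prime] [hq : Fact q.Prime]
    (hp8 : p % 8 = 5) (hq2 : q ≠ 2) (hxy : x ^ 2 = p * q * y ^ 2 + 1) (hy : Odd y) :
    ¬IsSquare (p : ZMod q) := by
  rw [← ZMod.exists_sq_eq_prime_iff_of_mod_four_eq_one (by omega) hq2]
  have hpq : Odd (p * q) := (Nat.odd_iff.mpr (by omega)).mul (hq.out.odd_of_ne_two hq2)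
  obtain ⟨m, rfl⟩ : ∃ m, x = m + 1 :=
    Nat.exists_eq_add_one.mpr (Nat.pos_of_ne_zero fun h => by simp [h] at hxy)
  have hm : Odd m := Nat.not_even_iff_odd.mp <| Nat.even_add_one.mp <|
    (Nat.even_pow' two_ne_zero).mp (hxy ▸ (hpq.mul hy.pow).add_one)
  have hm2 : m * (m + 2) = p * q * y ^ 2 := by linarith
  obtain ⟨a, b, u, v, hab, rfl, hn⟩ := Nat.exists_eq_mul_sq_of_coprime_of_mul_eq
    (Nat.mul_pos hp.out.pos hq.out.pos).ne'
    (Nat.coprime_self_add_right.mpr (Nat.coprime_two_right.mpr hm)) hm2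
  have h2 : ¬IsSquare (2 : ZMod p) := by
    rw [ZMod.exists_sq_eq_two_iff (by omega)]; omega
  have hn2 : ¬IsSquare (-2 : ZMod p) := by
    rw [ZMod.exists_sq_eq_neg_two_iff (by omega)]; omega
  rcases Nat.eq_of_mul_eq_prime_mul_prime hp.out hq.out hab with
    ⟨ha, hb⟩ | ⟨ha, hb⟩ | ⟨ha, hb⟩ | ⟨ha, hb⟩ <;> subst a b
  · have hu : (u : ZMod p) ^ 2 = -2 := by
      simpa [eq_neg_iff_add_eq_zero] using congrArg (Nat.cast : ℕ → ZMod p) hn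
    exact absurd (hu ▸ IsSquare.sq _) hn2
  · have hv : (q : ZMod p) * v ^ 2 = 2 := by
      simpa using (congrArg (Nat.cast : ℕ → ZMod p) hn).symm
    exact fun hsq => h2 (hv ▸ hsq.mul (IsSquare.sq _))
  · have hu : (q : ZMod p) * u ^ 2 = -2 := by
      simpa [eq_neg_iff_add_eq_zero] using congrArg (Nat.cast : ℕ → ZMod p) hn
    exact fun hsq => hn2 (hu ▸ hsq.mul (IsSquare.sq _))
  · have hv : (v : ZMod p) ^ 2 = 2 := by
      simpa using (congrArg (Nat.cast : ℕ → ZMod p) hn).symm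
    exact absurd (hv ▸ IsSquare.sq _) h2

theorem stmt_5_general (p q : ℕ) (hp : p.Prime) [Fact q.Prime]
    (hp8 : p % 8 = 5) (hq4 : q % 4 = 3)
    (d : ℤ) (hd : d = (p : ℤ) * q)
    (a : Pell.Solution₁ d) (ha : Pell.IsFundamental a) :
    Odd a.y ↔ legendreSym q p = -1 := by
  have := Fact.mk hp
  obtain ⟨x, y, hya, hx, hxy, hmin⟩ := ha.exists_nat_minimal (by rw [hd, Nat.cast_mul])
  rw [← hya, Int.odd_coe_nat, legendreSym.eq_neg_one_iff']
  rcases Nat.even_or_odd y with hy | hy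
  · exact iff_of_false (Nat.not_odd_iff_even.mpr hy)
      (not_not.mpr (isSquare_of_pell_minimal_of_even (by omega) hq4 hx hxy hmin hy))
  · exact iff_of_true hy (not_isSquare_of_pell_of_odd hp8 (by omega) hxy hy)

/-- Let `p, q` be primes with `p ≡ 5 (mod 8)`, `q ≡ 3 (mod 4)`, let `d = p·q`, and let
`(x, y)` be the fundamental solution of `x² − d·y² = 1`. Then `y` is odd if and only if
the Legendre symbol `(p/q)` equals `−1`. -/
theorem stmt_5 (p q : ℕ) (hp : p.Prime) (hq : q.Prime) [Fact q.Prime]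
    (hp8 : p % 8 = 5) (hq4 : q % 4 = 3)
    (d : ℤ) (hd : d = (p : ℤ) * q)
    (a : Pell.Solution₁ d) (ha : Pell.IsFundamental a) :
    Odd a.y ↔ legendreSym q p = -1 :=
  stmt_5_general p q hp hp8 hq4 d hd a ha
end

section
/- The fundamental solution (x, y) of the Pell equation x² − 209991·y² = 1 satisfies 209991 ∣ y. -/
/-!
The solution `solution209991 = (X, Y)` comes from the continued fraction of `√209991`, and
`209991 ∣ Y`; what has to be shown is that it is fundamental. Write it as `a ^ n` with `a` fundamental. From
`a.x ^ 2 = 1 + 209991 * a.y ^ 2` we get `a.x ≥ 459`, so `459 ^ n ≤ X < 459 ^ 36` and `n < 36`.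
If `n > 1`, then for a prime `q ∣ n` the solution is a `q`-th power of a solution, hence its image in
`(ℤ/p)[√209991]` is the `q`-th power of an element of norm one, for every `p`. For each prime
`q < 36` an exhaustive search modulo a suitable `p` shows that it is not.
-/

namespace Pell

namespace Solution₁

variable {d : ℤ}

def toQuadraticAlgebra (R : Type*) [CommRing R] : Solution₁ d →* QuadraticAlgebra R d 0 where
  toFun a := ⟨a.x, a.y⟩
  map_one' := by ext <;> simp [QuadraticAlgebra.re_one, QuadraticAlgebra.im_one]
  map_mul' a b := by ext <;> simp [x_mul, y_mul]; ring

theorem pow_ne_of_forall_pow_ne {R : Type*} [CommRing R] {q : ℕ} {b : Solution₁ d}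
    (h : ∀ u v : R, u ^ 2 - d * v ^ 2 = 1 →
      (⟨u, v⟩ : QuadraticAlgebra R d 0) ^ q ≠ ⟨b.x, b.y⟩)
    (c : Solution₁ d) : c ^ q ≠ b := by
  rintro rfl
  exact h c.x c.y (by simpa using congrArg (Int.cast : ℤ → R) c.prop)
    (map_pow (toQuadraticAlgebra R) c q).symm

end Solution₁

theorem IsFundamental.x_pow_le_x_pow {a : Solution₁ d} (h : IsFundamental a) (n : ℕ) :
    a.x ^ n ≤ (a ^ n).x := by
  induction n with
  | zero => simp
  | succ n ih =>
    have hy : 0 ≤ (a ^ n).y := by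
      cases n with
      | zero => simp
      | succ n => exact (Solution₁.y_pow_succ_pos h.x_pos h.2.1 n).le
    rw [pow_succ', pow_succ', Solution₁.x_mul]
    nlinarith [mul_le_mul_of_nonneg_left ih h.x_pos.le, h.d_pos, h.2.1,
      mul_nonneg (mul_nonneg h.d_pos.le h.2.1.le) hy]

end Pell

open Pell

def solution209991 : Solution₁ 209991 :=
  .mk 73167625974593700828660386030578462174657822217219422323217185183246387699092375684144844032935
    159668271237134731555657000565211906210618646389214219046317967425298022015645831738895036692
    (by norm_num)

-- Each modulus is the least `p` for which the search succeeds.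
set_option maxHeartbeats 1000000 in
theorem solution209991_ne_pow {q : ℕ} (hq : q.Prime) (hq36 : q < 36) (c : Solution₁ 209991) :
    c ^ q ≠ solution209991 := by
  interval_cases q <;> norm_num at hq
  · exact Solution₁.pow_ne_of_forall_pow_ne (R := ZMod 5) (by decide +kernel) c
  · exact Solution₁.pow_ne_of_forall_pow_ne (R := ZMod 17) (by decide +kernel) c
  · exact Solution₁.pow_ne_of_forall_pow_ne (R := ZMod 11) (by decide +kernel) c
  · exact Solution₁.pow_ne_of_forall_pow_ne (R := ZMod 13) (by decide +kernel) c
  · exact Solution₁.pow_ne_of_forall_pow_ne (R := ZMod 23) (by decide +kernel) c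
  · exact Solution₁.pow_ne_of_forall_pow_ne (R := ZMod 79) (by decide +kernel) c
  · exact Solution₁.pow_ne_of_forall_pow_ne (R := ZMod 67) (by decide +kernel) c
  · exact Solution₁.pow_ne_of_forall_pow_ne (R := ZMod 113) (by decide +kernel) c
  · exact Solution₁.pow_ne_of_forall_pow_ne (R := ZMod 229) (by decide +kernel) c
  · exact Solution₁.pow_ne_of_forall_pow_ne (R := ZMod 233) (by decide +kernel) c
  · exact Solution₁.pow_ne_of_forall_pow_ne (R := ZMod 61) (by decide +kernel) c

theorem lt_36_of_solution209991_eq_pow {a : Solution₁ 209991} (ha : IsFundamental a) {n : ℕ}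
    (hn : solution209991 = a ^ n) : n < 36 := by
  have hax : 459 ≤ a.x := by nlinarith [a.prop_x, ha.x_pos, ha.2.1]
  have hpow : (459 : ℤ) ^ n < 459 ^ 36 :=
    calc (459 : ℤ) ^ n ≤ a.x ^ n := pow_le_pow_left₀ (by norm_num) hax n
      _ ≤ (a ^ n).x := ha.x_pow_le_x_pow n
      _ = solution209991.x := by rw [hn]
      _ < 459 ^ 36 := by norm_num [solution209991]
  exact (pow_lt_pow_iff_right₀ (by norm_num)).mp hpow

/-- The fundamental solution `(x, y)` of `x² − 209991·y² = 1` satisfies `209991 ∣ y`. -/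
theorem stmt_15 (a : Pell.Solution₁ (209991 : ℤ)) (ha : Pell.IsFundamental a) :
    (209991 : ℤ) ∣ a.y := by
  obtain ⟨n, hn⟩ := ha.eq_pow_of_nonneg (a := solution209991) (by norm_num [solution209991])
    (by norm_num [solution209991])
  have hn1 : n = 1 := by
    have hn0 : n ≠ 0 := by
      rintro rfl
      simpa [solution209991] using congrArg Solution₁.x hn
    by_contra hn1
    have hq := Nat.minFac_prime hn1
    obtain ⟨m, hm⟩ := n.minFac_dvd
    refine solution209991_ne_pow hq ?_ (a ^ m) (by rw [← pow_mul, mul_comm, ← hm, hn])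
    exact (Nat.minFac_le (Nat.pos_of_ne_zero hn0)).trans_lt (lt_36_of_solution209991_eq_pow ha hn)
  rw [← pow_one a, ← hn1, ← hn]
  norm_num [solution209991]
end

section
/- The fundamental solution (x, y) of the Pell equation x² − 1752299·y² = 1 satisfies 1752299 ∣ y. -/
/-!
The explicit solution `witness`, with `1752299 ∣ witness.y`, is a power `a ^ (m + 1)` of the
fundamental solution `a`. Expanding binomially, `(a ^ (m + 1)).y ≡ (m + 1) a.xᵐ a.y` modulo `d = 1752299`,
and `a.x` is a unit modulo `d` because `a.x² - d a.y² = 1`. Since `a.x > √d > 1323`, the size of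
`witness.y` forces `m < 40`, so `m + 1` is coprime to `d = 41 · 79 · 541`, and hence `d ∣ a.y`.
-/

namespace Pell.Solution₁

variable {d : ℤ}

theorem x_pow_modEq (a : Solution₁ d) (n : ℕ) : (a ^ n).x ≡ a.x ^ n [ZMOD d] := by
  induction n with
  | zero => simp [Int.ModEq.refl]
  | succ n ih =>
    rw [pow_succ, x_mul, pow_succ]
    calc (a ^ n).x * a.x + d * ((a ^ n).y * a.y) ≡ (a ^ n).x * a.x + 0 [ZMOD d] :=
          Int.ModEq.add_left _ (Int.modEq_zero_iff_dvd.2 (dvd_mul_right _ _))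
      _ ≡ a.x ^ n * a.x [ZMOD d] := by rw [add_zero]; exact ih.mul_right _

theorem y_pow_succ_modEq (a : Solution₁ d) (n : ℕ) :
    (a ^ (n + 1)).y ≡ (n + 1) * a.x ^ n * a.y [ZMOD d] := by
  induction n with
  | zero => simp [Int.ModEq.refl]
  | succ n ih =>
    rw [pow_succ, y_mul]
    calc (a ^ (n + 1)).x * a.y + (a ^ (n + 1)).y * a.x
        ≡ a.x ^ (n + 1) * a.y + (n + 1) * a.x ^ n * a.y * a.x [ZMOD d] :=
          ((x_pow_modEq a _).mul_right _).add (ih.mul_right _)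
      _ = (↑(n + 1) + 1) * a.x ^ (n + 1) * a.y := by push_cast; ring

theorem isCoprime_d_x (a : Solution₁ d) : IsCoprime d a.x :=
  ⟨-a.y ^ 2, a.x, by linear_combination a.prop⟩

theorem dvd_y_of_dvd_y_pow_succ {a : Solution₁ d} {n : ℕ} (h : d ∣ (a ^ (n + 1)).y)
    (hn : IsCoprime d (n + 1)) : d ∣ a.y := by
  have : d ∣ (n + 1) * a.x ^ n * a.y :=
    Int.modEq_zero_iff_dvd.1 ((y_pow_succ_modEq a n).symm.trans (Int.modEq_zero_iff_dvd.2 h))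
  exact (hn.mul_right (a.isCoprime_d_x.pow_right)).dvd_of_dvd_mul_left this

theorem x_pow_mul_y_le_y_pow_succ {a : Solution₁ d} (hx : 0 < a.x) (hy : 0 ≤ a.y) (n : ℕ) :
    a.x ^ n * a.y ≤ (a ^ (n + 1)).y := by
  induction n with
  | zero => simp
  | succ n ih =>
    rw [pow_succ a, y_mul, pow_succ, mul_right_comm]
    nlinarith [mul_nonneg (x_pow_pos hx (n + 1)).le hy]

end Pell.Solution₁

theorem Pell.IsFundamental.d_lt_x_sq {d : ℤ} {a : Pell.Solution₁ d} (h : Pell.IsFundamental a) :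
    d < a.x ^ 2 := by
  rw [a.prop_x]
  nlinarith [h.d_pos, sq_pos_of_pos h.2.1]

namespace Pell1752299

open Pell Pell.Solution₁

-- The fundamental solution itself, computed from the continued fraction expansion of `√1752299`.
def witness : Solution₁ (1752299 : ℤ) :=
  .mk 624037846544309550511444897224897809327563710385236591274518556628719171841889461611522993451338807315489893509931449
    471418718494067332885466952034147955631267118263393512825383288806581267398742848048513539579069562692646604917020
    (by norm_num)

theorem witness_x_pos : 0 < witness.x := by norm_num [witness]

theorem witness_y_pos : 0 < witness.y := by norm_num [witness]

theorem dvd_witness_y : (1752299 : ℤ) ∣ witness.y := by norm_num [witness]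

theorem exponent_lt_forty {a : Solution₁ (1752299 : ℤ)} (ha : IsFundamental a) {m : ℕ}
    (hm : witness = a ^ (m + 1)) : m < 40 := by
  have hx : 1324 ≤ a.x := by
    have : (1323 : ℤ) ^ 2 < a.x ^ 2 := ha.d_lt_x_sq.trans' (by norm_num)
    exact lt_of_pow_lt_pow_left₀ 2 ha.x_pos.le this
  have : (1324 : ℤ) ^ m ≤ witness.y :=
    calc (1324 : ℤ) ^ m ≤ a.x ^ m := pow_le_pow_left₀ (by norm_num) hx m
      _ ≤ a.x ^ m * a.y := le_mul_of_one_le_right (pow_nonneg ha.x_pos.le m) ha.2.1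
      _ ≤ (a ^ (m + 1)).y := x_pow_mul_y_le_y_pow_succ ha.x_pos ha.2.1.le m
      _ = witness.y := by rw [hm]
  exact (pow_lt_pow_iff_right₀ (by norm_num)).1 (this.trans_lt (by norm_num [witness]))

end Pell1752299

open Pell1752299 in
/-- The fundamental solution `(x, y)` of `x² − 1752299·y² = 1` satisfies `1752299 ∣ y`. -/
theorem stmt_16 (a : Pell.Solution₁ (1752299 : ℤ)) (ha : Pell.IsFundamental a) :
    (1752299 : ℤ) ∣ a.y := by
  obtain ⟨_ | m, hm⟩ := ha.eq_pow_of_nonneg witness_x_pos witness_y_pos.le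
  · exact absurd (congrArg Pell.Solution₁.y hm) (by simpa using witness_y_pos.ne')
  have hcop : IsCoprime (1752299 : ℤ) (m + 1) := by
    have hmin : Nat.minFac 1752299 = 41 := by norm_num
    have : Nat.Coprime 1752299 (m + 1) :=
      Nat.coprime_of_lt_minFac m.succ_ne_zero (by have := exponent_lt_forty ha hm; omega)
    exact_mod_cast Nat.isCoprime_iff_coprime.2 this
  exact Pell.Solution₁.dvd_y_of_dvd_y_pow_succ (hm ▸ dvd_witness_y) hcop
end

section
/- The fundamental solution (x, y) of the Pell equation x² − 4099215·y² = 1 satisfies 4099215 ∣ y, and y is odd. -/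
/-!
The explicit positive solution `pellSol = (X, Y)` below has `4099215 ∣ Y` and `Y` odd; like
every positive solution, it is a power `a ^ n` of the fundamental solution `a`.
Since `a.y ∣ (a ^ n).y`, `a.y` is odd. Modulo `d = 4099215` one has
`(a ^ n).y ≡ n x ^ (n - 1) y` with `x` a unit, so `d ∣ a.y` as soon as `n` is prime to
`d = 3 · 5 · 273281`. For each such prime `p` pick a prime `q ≡ 1 (mod p)` and a square root
`s` of `d` in `𝔽_q`: if `p ∣ n`, the image `X + Y s` of `a ^ n` in `𝔽_qˣ` is a `p`-th power,
hence killed by `(q - 1) / p`, which a direct computation refutes.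
-/

namespace Pell.Solution₁

variable {d : ℤ}

def evalHom {R : Type*} [CommRing R] (r : {r : R // r * r = d}) : Solution₁ d →* R :=
  (Zsqrtd.lift r).toMonoidHom.comp (unitary (ℤ√d)).subtype

theorem evalHom_apply {R : Type*} [CommRing R] (r : {r : R // r * r = d}) (a : Solution₁ d) :
    evalHom r a = a.x + a.y * r :=
  rfl

theorem y_dvd_y_pow_s17 (a : Solution₁ d) (n : ℕ) : a.y ∣ (a ^ n).y := by
  induction n with
  | zero => simp
  | succ n ih =>
    rw [pow_succ, y_mul]
    exact dvd_add (dvd_mul_left _ _) (ih.mul_right _)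

/-- Modulo `d`, the solution `x + y√d` becomes the dual number `x + yε`, whose powers are
`x ^ n + n x ^ (n - 1) y ε`. -/
theorem intCast_y_pow {R : Type*} [CommRing R] (hd : (d : R) = 0) (a : Solution₁ d) (n : ℕ) :
    ((a ^ n).y : R) = n * (a.x : R) ^ (n - 1) * a.y := by
  have hε : (DualNumber.eps : DualNumber R) * DualNumber.eps = ((d : ℤ) : DualNumber R) := by
    rw [DualNumber.eps_mul_eps, ← TrivSqZeroExt.inl_intCast, hd, TrivSqZeroExt.inl_zero]
  have key := congrArg TrivSqZeroExt.snd (map_pow (evalHom ⟨_, hε⟩) a n)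
  simpa [evalHom_apply, mul_assoc] using key

theorem y_dvd_of_dvd_y_pow {m n : ℕ} (hd : (m : ℤ) ∣ d) (hn : n.Coprime m) (a : Solution₁ d)
    (h : (m : ℤ) ∣ (a ^ n).y) : (m : ℤ) ∣ a.y := by
  have hd' : (d : ZMod m) = 0 := (ZMod.intCast_zmod_eq_zero_iff_dvd d m).2 hd
  have hx : IsUnit (a.x : ZMod m) := by
    refine IsUnit.of_mul_eq_one (a.x : ZMod m) ?_
    have := congrArg (Int.cast : ℤ → ZMod m) a.prop_x
    push_cast [hd'] at this
    linear_combination this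
  have hn' : IsUnit (n : ZMod m) := (ZMod.unitOfCoprime n hn).isUnit
  rw [← ZMod.intCast_zmod_eq_zero_iff_dvd, intCast_y_pow hd'] at h
  rw [← ZMod.intCast_zmod_eq_zero_iff_dvd]
  exact (hn'.mul (hx.pow _)).mul_right_eq_zero.1 h

theorem not_dvd_of_evalHom_pow_ne_one {K : Type*} [Field K] [Fintype K]
    (r : {r : K // r * r = d}) {p j : ℕ} (hpj : p * j = Fintype.card K - 1)
    {a b : Solution₁ d} (hb : evalHom r b ^ j ≠ 1) {n : ℕ} (hn : b = a ^ n) : ¬p ∣ n := by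
  rintro ⟨k, rfl⟩
  have ha : evalHom r a ≠ 0 := (evalHom r).toHomUnits a |>.ne_zero
  apply hb
  rw [hn, map_pow, ← pow_mul, mul_right_comm, hpj, pow_mul,
    FiniteField.pow_card_sub_one_eq_one _ ha, one_pow]

end Pell.Solution₁

def pellX : ℤ := 179784248540261720933717275307349853452493807225709008240438748235173454612609215996568096528066597886608903086961202826693607419247563810009098615761060747707904512388295534181151738333885074597018691093195456596933456700435124

def pellY : ℤ := 88797612801324763663461176430433623945738065366142957025775077607213519113867213685157937417087578913686280667664485149887151164667163604752315683478467408748036619796833159898856304466263945231456913593944419084835966054145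

def pellSol : Pell.Solution₁ 4099215 := .mk pellX pellY (by norm_num [pellX, pellY])

theorem pellSol_not_dvd {q : ℕ} [Fact q.Prime] (s : ZMod q) (hs : s * s = (4099215 : ℤ))
    {p j : ℕ} (hpj : p * j = q - 1) (hb : ((pellX : ZMod q) + pellY * s) ^ j ≠ 1)
    {a : Pell.Solution₁ 4099215} {n : ℕ} (hn : pellSol = a ^ n) : ¬p ∣ n :=
  Pell.Solution₁.not_dvd_of_evalHom_pow_ne_one ⟨s, hs⟩ (by rwa [ZMod.card]) hb hn

/-- The fundamental solution `(x, y)` of `x² − 4099215·y² = 1` satisfies `4099215 ∣ y`,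
and `y` is odd. -/
theorem stmt_17 (a : Pell.Solution₁ (4099215 : ℤ)) (ha : Pell.IsFundamental a) :
    (4099215 : ℤ) ∣ a.y ∧ Odd a.y := by
  obtain ⟨n, hn⟩ := ha.eq_pow_of_nonneg (a := pellSol) (by norm_num [pellSol, pellX])
    (by norm_num [pellSol, pellY])
  have h3 : ¬3 ∣ n := by
    have : Fact (Nat.Prime 13) := ⟨by norm_num⟩
    refine pellSol_not_dvd (q := 13) 4 (by reduce_mod_char) (j := 4) rfl ?_ hn
    unfold pellX pellY; reduce_mod_char; decide
  have h5 : ¬5 ∣ n := by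
    have : Fact (Nat.Prime 61) := ⟨by norm_num⟩
    refine pellSol_not_dvd (q := 61) 25 (by reduce_mod_char) (j := 12) rfl ?_ hn
    unfold pellX pellY; reduce_mod_char; decide
  have h273281 : ¬273281 ∣ n := by
    have : Fact (Nat.Prime 15303737) := ⟨by norm_num⟩
    refine pellSol_not_dvd (q := 15303737) 3659211 (by reduce_mod_char) (j := 56) rfl ?_ hn
    unfold pellX pellY; reduce_mod_char; decide
  have hcop : n.Coprime (3 * 5 * 273281) := by
    refine .mul_right (.mul_right ?_ ?_) ?_ <;>
      refine Nat.Coprime.symm ((Nat.Prime.coprime_iff_not_dvd (by norm_num)).2 ?_)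
    exacts [h3, h5, h273281]
  have hy : (a ^ n).y = pellY := by rw [← hn]; rfl
  constructor
  · have := Pell.Solution₁.y_dvd_of_dvd_y_pow (m := 4099215) dvd_rfl hcop a
      (by rw [hy]; norm_num [pellY])
    exact_mod_cast this
  · refine Int.not_even_iff_odd.1 fun heven => ?_
    have := (even_iff_two_dvd.1 heven).trans (a.y_dvd_y_pow_s17 n)
    rw [hy] at this
    norm_num [pellY] at this
end
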